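/- arXiv:2206.11211 — 2 statements merged into one kernel-verified Lean document; each statement's English description precedes it below -/
import Mathlib

section
/- For every κ ∈ (0,∞) and all μ, ν ∈ M₊(Ω) one has HK_κ²(μ,ν) = √(‖μ‖·‖ν‖) · HK_κ²(μ/‖μ‖, ν/‖ν‖) + (√‖μ‖ − √‖ν‖)² (with the convention μ/‖μ‖ = 0 when μ = 0, and likewise for ν), and moreover HK_κ²(μ,ν) ≤ ‖μ‖ + ‖ν‖. -/
open scoped Classical
open MeasureTheory ENNReal Filter Topology Real
open scoped NNReal

noncomputable section

/-- The entropy function `φ` with `φ(s) = s log s - s + 1` for `s > 0`, `φ(0) = 1`. -/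
def phiEnt (s : ℝ≥0∞) : ℝ≥0∞ :=
  if s = 0 then 1 else if s = ⊤ then ⊤
  else ENNReal.ofReal (s.toReal * Real.log s.toReal - s.toReal + 1)

/-- Kullback–Leibler divergence of `σ` with respect to `μ`. -/
def KLdiv {X : Type*} [MeasurableSpace X] (σ μ : Measure X) : ℝ≥0∞ :=
  if σ ≪ μ then ∫⁻ x, phiEnt (σ.rnDeriv μ x) ∂μ else ⊤

/-- The cost `ĉ_κ(x,y) = -2 log cos(d(x,y)/κ)` for `d(x,y) ≤ κπ/2`, `∞` otherwise. -/
def hkCost {X : Type*} [PseudoMetricSpace X] (κ : ℝ) (x y : X) : ℝ≥0∞ :=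
  if dist x y < κ * π / 2 then ENNReal.ofReal (-2 * Real.log (Real.cos (dist x y / κ))) else ⊤

/-- Squared Hellinger–Kantorovich distance with length scale `κ`. -/
def HK2 {X : Type*} [MeasurableSpace X] [PseudoMetricSpace X] (κ : ℝ) (μ ν : Measure X) : ℝ≥0∞ :=
  ⨅ (γ : Measure (X × X)) (_ : IsFiniteMeasure γ),
    (∫⁻ p, hkCost κ p.1 p.2 ∂γ) + KLdiv (γ.map Prod.fst) μ + KLdiv (γ.map Prod.snd) ν

abbrev Ed (d : ℕ) : Type := EuclideanSpace ℝ (Fin d)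

/-- Truncated cosine `Cos(s) = cos(min(|s|, π/2))`. -/
def tcos (s : ℝ) : ℝ := Real.cos (min |s| (π / 2))

/-- Squared Hellinger distance. -/
def Hell2 {X : Type*} [MeasurableSpace X] (μ ν : Measure X) : ℝ≥0∞ :=
  ∫⁻ x, ENNReal.ofReal ((Real.sqrt ((μ.rnDeriv (μ + ν)) x).toReal
      - Real.sqrt ((ν.rnDeriv (μ + ν)) x).toReal) ^ 2) ∂(μ + ν)

/-- Squared Wasserstein-2 distance (value `∞` when no coupling exists). -/
def W2 {X : Type*} [MeasurableSpace X] [PseudoMetricSpace X] (μ ν : Measure X) : ℝ≥0∞ :=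
  ⨅ (γ : Measure (X × X)) (_ : γ.map Prod.fst = μ) (_ : γ.map Prod.snd = ν),
    ∫⁻ p, ENNReal.ofReal (dist p.1 p.2 ^ 2) ∂γ

/-- Borel σ-algebra on the space of finite measures with the weak* topology. -/
instance (X : Type*) [TopologicalSpace X] [MeasurableSpace X] [OpensMeasurableSpace X] :
    MeasurableSpace (FiniteMeasure X) := borel _

instance (X : Type*) [TopologicalSpace X] [MeasurableSpace X] [OpensMeasurableSpace X] :
    BorelSpace (FiniteMeasure X) := ⟨rfl⟩

/-- The set `𝔠` of nonnegative measures of total mass at most `M`. -/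
def cSet (X : Type*) [TopologicalSpace X] [MeasurableSpace X] [OpensMeasurableSpace X]
    (M : ℝ≥0) : Set (FiniteMeasure X) := {μ | μ.mass ≤ M}

/-- The barycenter functional `J_{Λ,κ}`. -/
def JCont {X : Type*} [MeasurableSpace X] [PseudoMetricSpace X] [OpensMeasurableSpace X]
    {M : ℝ≥0} (Λ : Measure (cSet X M)) (κ : ℝ) (ν : Measure X) : ℝ≥0∞ :=
  ∫⁻ μ : cSet X M, HK2 κ ((μ : FiniteMeasure X) : Measure X) ν ∂Λ

/-- Barycenter functional for the limit scales `κ∞ = 0` (Hellinger) and `κ∞ = ∞` (Wasserstein). -/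
def JContGen {X : Type*} [MeasurableSpace X] [PseudoMetricSpace X] [OpensMeasurableSpace X]
    {M : ℝ≥0} (Λ : Measure (cSet X M)) (κinf : ℝ≥0∞) (ν : Measure X) : ℝ≥0∞ :=
  if κinf = 0 then ∫⁻ μ : cSet X M, Hell2 ((μ : FiniteMeasure X) : Measure X) ν ∂Λ
  else if κinf = ⊤ then ∫⁻ μ : cSet X M, W2 ((μ : FiniteMeasure X) : Measure X) ν ∂Λ
  else ∫⁻ μ : cSet X M, HK2 κinf.toReal ((μ : FiniteMeasure X) : Measure X) ν ∂Λ

/-- The barycenter functional `J_{ρ,κ}` for Dirac input measures distributed as `ρ`. -/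
def JDirac {X : Type*} [MeasurableSpace X] [PseudoMetricSpace X]
    (ρ : Measure X) (κ : ℝ) (ν : Measure X) : ℝ≥0∞ :=
  ∫⁻ x, HK2 κ (Measure.dirac x) ν ∂ρ

/-- The dual constraint function `F_{ρ,κ}(ψ)`. -/
def Fcon {X : Type*} [MeasurableSpace X] [PseudoMetricSpace X]
    (ρ : Measure X) (κ : ℝ) (ψ : X → ℝ) (y : X) : ℝ :=
  ∫ x, tcos (dist x y / κ) ^ 2 / (1 - ψ x) ∂ρ

/-- Admissibility for the dual problem `(D_{ρ,κ})`. -/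
def DualAdm {X : Type*} [MeasurableSpace X] [PseudoMetricSpace X]
    (ρ : Measure X) (κ : ℝ) (ψ : X → ℝ) : Prop :=
  Continuous ψ ∧ (∀ x, ψ x < 1) ∧ ∀ y, Fcon ρ κ ψ y ≤ 1

/-- Optimality for the dual problem `(D_{ρ,κ})`. -/
def DualOpt {X : Type*} [MeasurableSpace X] [PseudoMetricSpace X]
    (ρ : Measure X) (κ : ℝ) (ψ : X → ℝ) : Prop :=
  DualAdm ρ κ ψ ∧ ∀ ψ' : X → ℝ, DualAdm ρ κ ψ' → ∫ x, ψ' x ∂ρ ≤ ∫ x, ψ x ∂ρ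

/-- `ν` minimizes `J_{ρ,κ}` over the nonnegative finite measures. -/
def PrimalMin {X : Type*} [MeasurableSpace X] [PseudoMetricSpace X]
    (ρ : Measure X) (κ : ℝ) (ν : Measure X) : Prop :=
  IsFiniteMeasure ν ∧ ∀ ν' : Measure X, IsFiniteMeasure ν' → JDirac ρ κ ν ≤ JDirac ρ κ ν'

/-- Support of a measure. -/
def msupport {X : Type*} [TopologicalSpace X] [MeasurableSpace X] (μ : Measure X) : Set X :=
  {x | ∀ U ∈ nhds x, 0 < μ U}

/-- A measure is discrete if it is a countable sum of weighted Dirac measures. -/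
def IsDiscreteHK {X : Type*} [MeasurableSpace X] (μ : Measure X) : Prop :=
  ∃ (x : ℕ → X) (c : ℕ → ℝ≥0∞), μ = Measure.sum fun n => c n • Measure.dirac (x n)

/-- The dual constraint set `Q_κ`. -/
def QSet (X : Type*) [PseudoMetricSpace X] (κ : ℝ) : Set ((X → ℝ) × (X → ℝ)) :=
  {p | Continuous p.1 ∧ Continuous p.2 ∧ (∀ x, p.1 x ≤ 1) ∧ (∀ y, p.2 y ≤ 1) ∧
    ∀ x y, tcos (dist x y / κ) ^ 2 ≤ (1 - p.1 x) * (1 - p.2 y)}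

/-!
Rescaling a coupling by `λ = √(m n)`, where `m = ‖μ‖` and `n = ‖ν‖`, is a bijection of the finite
couplings which multiplies the transport cost by `λ`. The entropy satisfies
`b φ(a s / b) = a φ(s) + a s log (a / b) + b - a`, hence
`KL(λσ | m μ̂) = λ KL(σ | μ̂) + λ ‖σ‖ log (λ / m) + m - λ` for a probability measure `μ̂`, and
likewise for `ν`. For a coupling the two marginals have the same mass, and
`log (λ / m) + log (λ / n) = 0`, so the logarithmic terms cancel and the remaining constant
`m + n - 2λ` is `(√m - √n)²`. The bound `HK² ≤ ‖μ‖ + ‖ν‖` is the value of the zero coupling.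
-/

open InformationTheory

lemma phiEnt_eq_ofReal_klFun {s : ℝ≥0∞} (hs : s ≠ ⊤) :
    phiEnt s = ENNReal.ofReal (klFun s.toReal) := by
  rcases eq_or_ne s 0 with rfl | hs0
  · simp [phiEnt, klFun_zero]
  · rw [phiEnt, if_neg hs0, if_neg hs, klFun]
    ring_nf

lemma mul_klFun_rescale {x y : ℝ} (hx : 0 < x) (hy : 0 < y) {t : ℝ} (ht : 0 ≤ t) :
    y * klFun (y⁻¹ * (x * t)) + x * max (Real.log (y / x)) 0 * t + x
      = x * klFun t + x * max (Real.log (x / y)) 0 * t + y := by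
  have hlog : Real.log (y / x) = -Real.log (x / y) := by rw [← Real.log_inv, inv_div]
  have hmax : max (Real.log (x / y)) 0 - max (-Real.log (x / y)) 0 = Real.log (x / y) := by
    rcases le_total (Real.log (x / y)) 0 with h | h
    · simp [h]
    · simp [h]
  rcases ht.eq_or_lt with rfl | ht0
  · simp only [mul_zero, klFun_zero]
    ring
  · have hmul : Real.log (y⁻¹ * (x * t)) = Real.log (x / y) + Real.log t := by
      rw [← Real.log_mul (by positivity) ht0.ne', div_eq_inv_mul, mul_assoc]
    have hyy : y * y⁻¹ = 1 := mul_inv_cancel₀ hy.ne'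
    rw [klFun, klFun, hmul, hlog]
    linear_combination (x * t * (Real.log (x / y) + Real.log t) - x * t) * hyy - x * t * hmax

lemma mul_phiEnt_rescale {a b s : ℝ≥0∞} (ha0 : a ≠ 0) (hat : a ≠ ⊤) (hb0 : b ≠ 0)
    (hbt : b ≠ ⊤) (hs : s ≠ ⊤) :
    b * phiEnt (b⁻¹ * (a * s)) + a * ENNReal.ofReal (Real.log (b.toReal / a.toReal)) * s + a
      = a * phiEnt s + a * ENNReal.ofReal (Real.log (a.toReal / b.toReal)) * s + b := by
  have hbs : b⁻¹ * (a * s) ≠ ⊤ := by finiteness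
  rw [phiEnt_eq_ofReal_klFun hs, phiEnt_eq_ofReal_klFun hbs,
    ← ENNReal.toReal_eq_toReal_iff' (by finiteness) (by finiteness)]
  simp only [ENNReal.toReal_add, ENNReal.toReal_mul, ENNReal.toReal_inv, ENNReal.toReal_ofReal',
    ne_eq, ENNReal.mul_eq_top, ENNReal.add_eq_top, ENNReal.ofReal_ne_top, hat, hbt, hs, hb0, ha0,
    or_false, false_and, and_false, not_false_eq_true]
  rw [max_eq_left (klFun_nonneg (by positivity)), max_eq_left (klFun_nonneg (by positivity))]
  exact mul_klFun_rescale (ENNReal.toReal_pos ha0 hat) (ENNReal.toReal_pos hb0 hbt) ENNReal.toReal_nonneg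



section KL

variable {X : Type*} [MeasurableSpace X]

lemma KLdiv_zero_left (μ : Measure X) : KLdiv 0 μ = μ Set.univ := by
  rw [KLdiv, if_pos (Measure.AbsolutelyContinuous.zero μ), ← lintegral_one]
  refine lintegral_congr_ae ?_
  filter_upwards [Measure.rnDeriv_zero μ] with x hx
  simp [hx, phiEnt]

lemma KLdiv_zero_right {σ : Measure X} (hσ : σ ≠ 0) : KLdiv σ 0 = ⊤ := by
  rw [KLdiv, if_neg (Measure.absolutelyContinuous_zero_iff.not.2 hσ)]

lemma smul_absolutelyContinuous_smul_iff {σ μ : Measure X} {a b : ℝ≥0∞} (ha : a ≠ 0)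
    (hb : b ≠ 0) : a • σ ≪ b • μ ↔ σ ≪ μ :=
  ⟨fun h ↦ ((Measure.absolutelyContinuous_smul ha).trans h).trans
      Measure.smul_absolutelyContinuous,
    fun h ↦ (Measure.smul_absolutelyContinuous.trans h).trans
      (Measure.absolutelyContinuous_smul hb)⟩

/-- The identity `KL(aσ | bμ) = a KL(σ | μ) + a ‖σ‖ log (a / b) + (b - a) ‖μ‖`, with the positive
and negative parts of the logarithm on opposite sides so that every term lies in `ℝ≥0∞`. -/
lemma KLdiv_smul_smul (σ μ : Measure X) [IsFiniteMeasure σ] [SigmaFinite μ] {a b : ℝ≥0∞}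
    (ha0 : a ≠ 0) (hat : a ≠ ⊤) (hb0 : b ≠ 0) (hbt : b ≠ ⊤) :
    KLdiv (a • σ) (b • μ) + a * ENNReal.ofReal (Real.log (b.toReal / a.toReal)) * σ Set.univ
        + a * μ Set.univ
      = a * KLdiv σ μ + a * ENNReal.ofReal (Real.log (a.toReal / b.toReal)) * σ Set.univ
        + b * μ Set.univ := by
  by_cases hσμ : σ ≪ μ
  swap
  · rw [KLdiv, KLdiv, if_neg hσμ, if_neg ((smul_absolutelyContinuous_smul_iff ha0 hb0).not.2 hσμ),
      ENNReal.mul_top ha0]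
    simp
  have : IsFiniteMeasure (a • σ) := σ.smul_finite hat
  have hrn : ∀ᵐ x ∂μ, (a • σ).rnDeriv (b • μ) x = b⁻¹ * (a * σ.rnDeriv μ x) := by
    filter_upwards [Measure.rnDeriv_smul_right_of_ne_top (a • σ) μ hb0 hbt,
      Measure.rnDeriv_smul_left_of_ne_top σ μ hat] with x h₁ h₂
    simp [h₁, h₂]
  have hf := Measure.measurable_rnDeriv σ μ
  rw [KLdiv, KLdiv, if_pos ((smul_absolutelyContinuous_smul_iff ha0 hb0).2 hσμ), if_pos hσμ,
    lintegral_smul_measure, smul_eq_mul, lintegral_congr_ae (hrn.mono fun x hx ↦ by rw [hx]),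
    ← Measure.lintegral_rnDeriv hσμ]
  have hsplit : ∀ (g : X → ℝ≥0∞) (c d e : ℝ≥0∞), c ≠ ⊤ → d ≠ ⊤ →
      c * ∫⁻ x, g x ∂μ + d * ∫⁻ x, σ.rnDeriv μ x ∂μ + e * μ Set.univ
        = ∫⁻ x, c * g x + d * σ.rnDeriv μ x + e ∂μ := fun g c d e hc hd ↦ by
    rw [lintegral_add_right _ measurable_const, lintegral_add_right _ (hf.const_mul _),
      lintegral_const_mul' _ _ hc, lintegral_const_mul' _ _ hd, lintegral_const]
  rw [hsplit _ _ _ _ hbt (by finiteness), hsplit _ _ _ _ hat (by finiteness)]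
  refine lintegral_congr_ae ?_
  filter_upwards [Measure.rnDeriv_lt_top σ μ] with x hx
  exact mul_phiEnt_rescale ha0 hat hb0 hbt hx.ne

lemma KLdiv_smul_add_KLdiv_smul {σ τ μ ν : Measure X} [IsFiniteMeasure σ] [IsFiniteMeasure τ]
    [IsProbabilityMeasure μ] [IsProbabilityMeasure ν] (hστ : σ Set.univ = τ Set.univ)
    {l m n : ℝ≥0∞} (hl0 : l ≠ 0) (hlt : l ≠ ⊤) (hm0 : m ≠ 0) (hmt : m ≠ ⊤) (hn0 : n ≠ 0)
    (hnt : n ≠ ⊤) (hlmn : l ^ 2 = m * n) :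
    KLdiv (l • σ) (m • μ) + KLdiv (l • τ) (n • ν) + 2 * l
      = l * (KLdiv σ μ + KLdiv τ ν) + (m + n) := by
  have hlmn' : l.toReal * l.toReal = m.toReal * n.toReal := by
    rw [← sq, ← ENNReal.toReal_pow, hlmn, ENNReal.toReal_mul]
  have hl : l.toReal ≠ 0 := (ENNReal.toReal_pos hl0 hlt).ne'
  have hm : m.toReal ≠ 0 := (ENNReal.toReal_pos hm0 hmt).ne'
  have hn : n.toReal ≠ 0 := (ENNReal.toReal_pos hn0 hnt).ne'
  have h₁ := KLdiv_smul_smul σ μ hl0 hlt hm0 hmt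
  have h₂ := KLdiv_smul_smul τ ν hl0 hlt hn0 hnt
  have hq₁ : l.toReal / m.toReal = n.toReal / l.toReal := by
    rw [div_eq_div_iff hm hl]; linarith
  have hq₂ : l.toReal / n.toReal = m.toReal / l.toReal := by
    rw [div_eq_div_iff hn hl]; linarith
  rw [hq₁] at h₁
  rw [hq₂, ← hστ] at h₂
  simp only [measure_univ, mul_one] at h₁ h₂
  set A := l * ENNReal.ofReal (Real.log (m.toReal / l.toReal)) * σ Set.univ
  set B := l * ENNReal.ofReal (Real.log (n.toReal / l.toReal)) * σ Set.univ
  refine (ENNReal.add_left_inj (a := A + B) (by finiteness)).1 ?_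
  calc _ = (KLdiv (l • σ) (m • μ) + A + l) + (KLdiv (l • τ) (n • ν) + B + l) := by ring
    _ = (l * KLdiv σ μ + B + m) + (l * KLdiv τ ν + A + n) := by rw [h₁, h₂]
    _ = _ := by ring

end KL

lemma iInf_isFiniteMeasure_smul {Y : Type*} [MeasurableSpace Y] {c : ℝ≥0∞} (hc0 : c ≠ 0)
    (hct : c ≠ ⊤) (f : Measure Y → ℝ≥0∞) :
    ⨅ (γ : Measure Y) (_ : IsFiniteMeasure γ), f (c • γ)
      = ⨅ (γ : Measure Y) (_ : IsFiniteMeasure γ), f γ := by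
  refine le_antisymm (le_iInf₂ fun γ _ ↦ ?_)
    (le_iInf₂ fun γ _ ↦ iInf₂_le_of_le (c • γ) (γ.smul_finite hct) le_rfl)
  refine iInf₂_le_of_le (c⁻¹ • γ) (γ.smul_finite (ENNReal.inv_ne_top.2 hc0)) ?_
  rw [smul_smul, ENNReal.mul_inv_cancel hc0 hct, one_smul]

section HK

variable {X : Type*} [MeasurableSpace X] [PseudoMetricSpace X]

def hkEnergy (κ : ℝ) (μ ν : Measure X) (γ : Measure (X × X)) : ℝ≥0∞ :=
  (∫⁻ p, hkCost κ p.1 p.2 ∂γ) + KLdiv (γ.map Prod.fst) μ + KLdiv (γ.map Prod.snd) ν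

lemma HK2_eq_iInf_hkEnergy (κ : ℝ) (μ ν : Measure X) :
    HK2 κ μ ν = ⨅ (γ : Measure (X × X)) (_ : IsFiniteMeasure γ), hkEnergy κ μ ν γ := rfl

lemma hkEnergy_zero (κ : ℝ) (μ ν : Measure X) : hkEnergy κ μ ν 0 = μ Set.univ + ν Set.univ := by
  simp [hkEnergy, KLdiv_zero_left]

lemma HK2_le_measure_univ_add (κ : ℝ) (μ ν : Measure X) :
    HK2 κ μ ν ≤ μ Set.univ + ν Set.univ := by
  rw [HK2_eq_iInf_hkEnergy, ← hkEnergy_zero κ μ ν]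
  exact iInf₂_le (0 : Measure (X × X)) (by infer_instance)

lemma HK2_zero_left (κ : ℝ) (ν : Measure X) : HK2 κ 0 ν = ν Set.univ := by
  refine le_antisymm (by simpa using HK2_le_measure_univ_add κ 0 ν) ?_
  rw [HK2_eq_iInf_hkEnergy]
  refine le_iInf₂ fun γ _ ↦ ?_
  rcases eq_or_ne γ 0 with rfl | hγ
  · simp [hkEnergy_zero]
  · simp [hkEnergy, KLdiv_zero_right ((Measure.map_ne_zero_iff measurable_fst.aemeasurable).2 hγ)]

lemma HK2_zero_right (κ : ℝ) (μ : Measure X) : HK2 κ μ 0 = μ Set.univ := by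
  refine le_antisymm (by simpa using HK2_le_measure_univ_add κ μ 0) ?_
  rw [HK2_eq_iInf_hkEnergy]
  refine le_iInf₂ fun γ _ ↦ ?_
  rcases eq_or_ne γ 0 with rfl | hγ
  · simp [hkEnergy_zero]
  · simp [hkEnergy, KLdiv_zero_right ((Measure.map_ne_zero_iff measurable_snd.aemeasurable).2 hγ)]

lemma hkEnergy_smul (κ : ℝ) (μ ν : Measure X) [IsProbabilityMeasure μ] [IsProbabilityMeasure ν]
    {l m n : ℝ≥0∞} (hl0 : l ≠ 0) (hlt : l ≠ ⊤) (hm0 : m ≠ 0) (hmt : m ≠ ⊤) (hn0 : n ≠ 0)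
    (hnt : n ≠ ⊤) (hlmn : l ^ 2 = m * n) (γ : Measure (X × X)) [IsFiniteMeasure γ] :
    hkEnergy κ (m • μ) (n • ν) (l • γ) + 2 * l = l * hkEnergy κ μ ν γ + (m + n) := by
  have hmarg : (γ.map Prod.fst) Set.univ = (γ.map Prod.snd) Set.univ := by
    simp [Measure.map_apply measurable_fst, Measure.map_apply measurable_snd]
  have h := KLdiv_smul_add_KLdiv_smul (μ := μ) (ν := ν) hmarg hl0 hlt hm0 hmt hn0 hnt hlmn
  simp only [hkEnergy, lintegral_smul_measure, Measure.map_smul, smul_eq_mul, add_assoc] at h ⊢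
  rw [h]
  ring

lemma HK2_smul_add (κ : ℝ) (μ ν : Measure X) [IsProbabilityMeasure μ] [IsProbabilityMeasure ν]
    {l m n : ℝ≥0∞} (hl0 : l ≠ 0) (hlt : l ≠ ⊤) (hm0 : m ≠ 0) (hmt : m ≠ ⊤) (hn0 : n ≠ 0)
    (hnt : n ≠ ⊤) (hlmn : l ^ 2 = m * n) :
    HK2 κ (m • μ) (n • ν) + 2 * l = l * HK2 κ μ ν + (m + n) := by
  rw [HK2_eq_iInf_hkEnergy, ← iInf_isFiniteMeasure_smul hl0 hlt, HK2_eq_iInf_hkEnergy,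
    ENNReal.mul_iInf_of_ne hl0 hlt, ENNReal.iInf_add, ENNReal.iInf_add]
  refine iInf_congr fun γ ↦ ?_
  rw [ENNReal.mul_iInf_of_ne hl0 hlt, ENNReal.iInf_add, ENNReal.iInf_add]
  exact iInf_congr fun _ ↦ hkEnergy_smul κ μ ν hl0 hlt hm0 hmt hn0 hnt hlmn γ

lemma HK2_eq_sqrt_mul_HK2_normalize_add (κ : ℝ) (μ ν : Measure X) [IsFiniteMeasure μ]
    [IsFiniteMeasure ν] [NeZero μ] [NeZero ν] :
    HK2 κ μ ν
      = ENNReal.ofReal (Real.sqrt ((μ Set.univ).toReal * (ν Set.univ).toReal))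
          * HK2 κ ((μ Set.univ)⁻¹ • μ) ((ν Set.univ)⁻¹ • ν)
        + ENNReal.ofReal ((Real.sqrt (μ Set.univ).toReal - Real.sqrt (ν Set.univ).toReal) ^ 2) := by
  set m := μ Set.univ
  set n := ν Set.univ
  have hm0 : m ≠ 0 := Measure.measure_univ_ne_zero.2 (NeZero.ne μ)
  have hn0 : n ≠ 0 := Measure.measure_univ_ne_zero.2 (NeZero.ne ν)
  have hmt : m ≠ ⊤ := measure_ne_top μ _
  have hnt : n ≠ ⊤ := measure_ne_top ν _
  have hm := ENNReal.toReal_pos hm0 hmt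
  have hn := ENNReal.toReal_pos hn0 hnt
  set l := ENNReal.ofReal (Real.sqrt (m.toReal * n.toReal))
  have hl0 : l ≠ 0 := (ENNReal.ofReal_pos.2 (Real.sqrt_pos.2 (mul_pos hm hn))).ne'
  have hlmn : l ^ 2 = m * n := by
    rw [← ENNReal.ofReal_pow (Real.sqrt_nonneg _), Real.sq_sqrt (mul_pos hm hn).le,
      ENNReal.ofReal_mul hm.le, ENNReal.ofReal_toReal hmt, ENNReal.ofReal_toReal hnt]
  have hmn : m + n = ENNReal.ofReal ((Real.sqrt m.toReal - Real.sqrt n.toReal) ^ 2) + 2 * l :=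
    calc m + n = ENNReal.ofReal (m.toReal + n.toReal) := by
          rw [ENNReal.ofReal_add hm.le hn.le, ENNReal.ofReal_toReal hmt, ENNReal.ofReal_toReal hnt]
      _ = ENNReal.ofReal ((Real.sqrt m.toReal - Real.sqrt n.toReal) ^ 2
            + 2 * Real.sqrt (m.toReal * n.toReal)) := by
          rw [Real.sqrt_mul hm.le]
          congr 1
          linear_combination -Real.sq_sqrt hm.le - Real.sq_sqrt hn.le
      _ = _ := by
          rw [ENNReal.ofReal_add (sq_nonneg _) (by positivity), ENNReal.ofReal_mul zero_le_two,
            ENNReal.ofReal_ofNat]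
  have key := HK2_smul_add κ (m⁻¹ • μ) (n⁻¹ • ν) hl0 ENNReal.ofReal_ne_top hm0 hmt hn0 hnt hlmn
  rw [smul_smul, ENNReal.mul_inv_cancel hm0 hmt, one_smul, smul_smul,
    ENNReal.mul_inv_cancel hn0 hnt, one_smul, hmn, ← add_assoc] at key
  exact (ENNReal.add_left_inj (by finiteness)).1 key

end HK

theorem hk_mass_rescaling_general {d : ℕ} (Ω : Set (Ed d)) (κ : ℝ)
    (μ ν : Measure ↥Ω) [IsFiniteMeasure μ] [IsFiniteMeasure ν] :
    HK2 κ μ ν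
      = ENNReal.ofReal (Real.sqrt ((μ Set.univ).toReal * (ν Set.univ).toReal))
          * HK2 κ ((μ Set.univ)⁻¹ • μ) ((ν Set.univ)⁻¹ • ν)
        + ENNReal.ofReal ((Real.sqrt (μ Set.univ).toReal - Real.sqrt (ν Set.univ).toReal) ^ 2)
    ∧ HK2 κ μ ν ≤ μ Set.univ + ν Set.univ := by
  refine ⟨?_, HK2_le_measure_univ_add κ μ ν⟩
  rcases eq_zero_or_neZero μ with rfl | _
  · simp [HK2_zero_left, Real.sq_sqrt]
  rcases eq_zero_or_neZero ν with rfl | _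
  · simp [HK2_zero_right, Real.sq_sqrt]
  exact HK2_eq_sqrt_mul_HK2_normalize_add κ μ ν

/-- Mass-rescaling identity and upper bound for the Hellinger--Kantorovich distance. -/
theorem hk_mass_rescaling {d : ℕ} (Ω : Set (Ed d)) (hΩ₁ : IsCompact Ω) (hΩ₂ : Convex ℝ Ω)
    (hΩ₃ : (interior Ω).Nonempty) (κ : ℝ) (hκ : 0 < κ)
    (μ ν : Measure ↥Ω) [IsFiniteMeasure μ] [IsFiniteMeasure ν] :
    HK2 κ μ ν
      = ENNReal.ofReal (Real.sqrt ((μ Set.univ).toReal * (ν Set.univ).toReal))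
          * HK2 κ ((μ Set.univ)⁻¹ • μ) ((ν Set.univ)⁻¹ • ν)
        + ENNReal.ofReal ((Real.sqrt (μ Set.univ).toReal - Real.sqrt (ν Set.univ).toReal) ^ 2)
    ∧ HK2 κ μ ν ≤ μ Set.univ + ν Set.univ :=
  hk_mass_rescaling_general Ω κ μ ν

end
end

section
/- Let ρ ∈ P(Ω) and κ ∈ (0,∞). A pair (ν, ψ) ∈ M₊(Ω) × C(Ω) with ψ < 1 and F_{ρ,κ}(ψ) ≤ 1 on Ω is optimal (i.e. ν minimizes J_{ρ,κ} over M₊(Ω) and ψ maximizes ∫_Ω ψ dρ among all admissible dual variables) if and only if ψ(x) = 1 − √( ∫_Ω Cos²(|x−y|/κ) dν(y) ) for ρ-a.e. x ∈ Ω and F_{ρ,κ}(ψ)(y) = 1 for ν-a.e. y ∈ Ω. -/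
/-!
For a Dirac mass the Hellinger–Kantorovich problem is explicit. Writing
`C_ν(x) = ∫ Cos²(|x - y|/κ) dν(y)`, one has `HK²(δ_x, ν) = 1 + ν(Ω) - 2 √C_ν(x)`: the plan
`δ_x ⊗ (Cos²(|x - ·|/κ) / √C_ν(x)) ν` attains this value, and the Fenchel–Young inequality for the
entropy bounds every plan from below. Hence `J(ν) = 1 + ν(Ω) - 2 ∫ √C_ν dρ`, and for every
admissible `ψ` (using Fubini for `∫ F(ψ) dν`)

  `J(ν) - ∫ ψ dρ = ∫ (1 - ψ - √C_ν)² / (1 - ψ) dρ + ∫ (1 - F(ψ)) dν ≥ 0.`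

This is weak duality, and equality holds exactly under the two stated conditions. Conversely, if
`ν` minimizes `J`, then varying its mass gives `∫ √C_ν dρ = ν(Ω)`, and adding small Dirac masses
gives `F(1 - √(C_ν + t)) ≤ 1` for `t > 0`; these admissible `ψ_t` have `∫ ψ_t dρ → J(ν)`, so a
maximizing `ψ` closes the duality gap.
-/

open scoped Classical
open MeasureTheory ENNReal Filter Topology Real
open scoped NNReal

noncomputable section

/-- A measure is discrete if it is a countable sum of weighted Dirac measures. -/
def IsDiscreteMeasure {X : Type*} [MeasurableSpace X] (μ : Measure X) : Prop :=
  ∃ (x : ℕ → X) (c : ℕ → ℝ≥0∞), μ = Measure.sum fun n => c n • Measure.dirac (x n)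

open InformationTheory

lemma Real.mul_log_sub_le_mul_log_self_sub {t v : ℝ} (ht : 0 ≤ t) (hv : 0 < v) :
    t * log v - v ≤ t * log t - t := by
  rcases ht.eq_or_lt with rfl | ht
  · simpa using hv.le
  have h := mul_nonneg hv.le (klFun_nonneg (div_nonneg ht.le hv.le))
  rw [klFun_apply, log_div ht.ne' hv.ne'] at h
  have : v * (t / v * (log t - log v) + 1 - t / v) = t * log t - t * log v + v - t := by
    field_simp
  linarith

lemma Real.mul_log_add_one_sub_nonneg {u s : ℝ} (hu : 0 ≤ u) (hus : u ≤ s) :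
    0 ≤ u * log s + 1 - u := by
  rcases hu.eq_or_lt with rfl | hu
  · simp
  have := klFun_nonneg hu.le
  rw [klFun_apply] at this
  nlinarith [log_le_log hu hus]

lemma exists_pos_one_sub_two_sqrt_le {C M : ℝ} (hC : 0 ≤ C) (hM : 0 ≤ M) :
    ∃ s : ℝ, 0 < s ∧ 1 - 2 * √C ≤ -(s * C) + M * log s + klFun M := by
  rcases hC.eq_or_lt with rfl | hC
  · refine ⟨exp (1 - log M), exp_pos _, ?_⟩
    rw [log_exp, klFun_apply, sqrt_zero]
    exact le_of_eq (by ring)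
  · refine ⟨(√C)⁻¹, by positivity, ?_⟩
    have := Real.mul_log_sub_le_mul_log_self_sub hM (sqrt_pos.mpr hC)
    rw [Real.log_inv, klFun_apply, inv_mul_eq_div, Real.div_sqrt]
    linarith

lemma Real.div_two_sqrt_le_sqrt_add_sub_sqrt {a b e : ℝ} (ha : 0 ≤ a) (hb : 0 ≤ b) (hbe : b ≤ e) :
    b / (2 * √(a + e)) ≤ √(a + b) - √a := by
  rcases (add_nonneg ha (hb.trans hbe)).eq_or_lt with h0 | hpos
  · rw [show b = 0 by linarith, zero_div]
    exact sub_nonneg.mpr (sqrt_le_sqrt (by linarith))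
  have hu : √(a + b) ≤ √(a + e) := sqrt_le_sqrt (by linarith)
  have hv : √a ≤ √(a + b) := sqrt_le_sqrt (by linarith)
  have hsq : √(a + b) ^ 2 - √a ^ 2 = b := by
    rw [sq_sqrt (by linarith), sq_sqrt ha]
    ring
  rw [div_le_iff₀ (by positivity)]
  nlinarith [sqrt_nonneg a]

lemma Real.add_div_sub_two_sqrt {a c : ℝ} (ha : a ≠ 0) (hc : 0 ≤ c) :
    a + c / a - 2 * √c = (a - √c) ^ 2 / a := by
  field_simp
  rw [sub_sq, sq_sqrt hc]
  ring

lemma phiEnt_ofReal {t : ℝ} (ht : 0 ≤ t) :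
    phiEnt (ENNReal.ofReal t) = ENNReal.ofReal (klFun t) := by
  rcases ht.eq_or_lt with rfl | ht
  · simp [phiEnt, klFun_zero]
  · rw [phiEnt, if_neg (by simpa using ht), if_neg ofReal_ne_top, toReal_ofReal ht.le, klFun_apply]
    ring_nf

section Measures

variable {X : Type*} [MeasurableSpace X]

lemma KLdiv_withDensity (ν : Measure X) [SigmaFinite ν] {g : X → ℝ≥0∞} (hg : Measurable g) :
    KLdiv (ν.withDensity g) ν = ∫⁻ y, phiEnt (g y) ∂ν := by
  rw [KLdiv, if_pos (withDensity_absolutelyContinuous ν g)]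
  refine lintegral_congr_ae ?_
  filter_upwards [Measure.rnDeriv_withDensity ν hg] with y hy
  rw [hy]

lemma KLdiv_smul_dirac [MeasurableSingletonClass X] (x : X) (c : ℝ≥0∞) :
    KLdiv (c • Measure.dirac x) (Measure.dirac x) = phiEnt c := by
  rw [← withDensity_const, KLdiv_withDensity _ measurable_const, lintegral_dirac]

lemma eq_smul_dirac_of_absolutelyContinuous [MeasurableSingletonClass X] {σ : Measure X} {x : X}
    (h : σ ≪ Measure.dirac x) : σ = σ Set.univ • Measure.dirac x := by
  have hσ : σ = σ {x} • Measure.dirac x := by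
    rw [← Measure.restrict_singleton, Measure.restrict_eq_self_of_ae_mem]
    exact h.ae_le ((ae_dirac_iff (measurableSet_singleton x)).mpr rfl)
  have hmass : σ Set.univ = σ {x} := by nth_rw 1 [hσ]; simp
  rwa [hmass]

lemma ofReal_integral_le_lintegral_ofReal {μ : Measure X} {f : X → ℝ} (hf : Integrable f μ) :
    ENNReal.ofReal (∫ x, f x ∂μ) ≤ ∫⁻ x, ENNReal.ofReal (f x) ∂μ := by
  rw [integral_eq_lintegral_pos_part_sub_lintegral_neg_part hf]
  exact (ENNReal.ofReal_le_ofReal (sub_le_self _ toReal_nonneg)).trans ofReal_toReal_le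

lemma Continuous.integrable_of_compactSpace [TopologicalSpace X] [CompactSpace X]
    [OpensMeasurableSpace X] {μ : Measure X} [IsFiniteMeasure μ] {f : X → ℝ} (hf : Continuous f) :
    Integrable f μ :=
  hf.integrable_of_hasCompactSupport (.of_compactSpace f)

end Measures

section Kernel

variable {X : Type*} [PseudoMetricSpace X] {κ : ℝ}

-- `hkKernel κ x y = exp (-hkCost κ x y)`, see `hkCost_eq`.
def hkKernel (κ : ℝ) (x y : X) : ℝ := tcos (dist x y / κ) ^ 2

lemma tcos_nonneg (s : ℝ) : 0 ≤ tcos s :=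
  cos_nonneg_of_mem_Icc ⟨by linarith [pi_pos, le_min (abs_nonneg s) pi_div_two_pos.le],
    min_le_right _ _⟩

lemma hkKernel_nonneg (x y : X) : 0 ≤ hkKernel κ x y := sq_nonneg _

lemma hkKernel_le_one (x y : X) : hkKernel κ x y ≤ 1 :=
  pow_le_one₀ (tcos_nonneg _) (cos_le_one _)

lemma continuous_tcos : Continuous tcos := by unfold tcos; fun_prop

lemma Continuous.hkKernel {Y : Type*} [TopologicalSpace Y] {f g : Y → X} (hf : Continuous f)
    (hg : Continuous g) : Continuous fun z => hkKernel κ (f z) (g z) :=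
  (continuous_tcos.comp ((hf.dist hg).div_const κ)).pow 2

lemma hkKernel_eq_cos_sq (hκ : 0 < κ) {x y : X} (h : dist x y < κ * π / 2) :
    hkKernel κ x y = cos (dist x y / κ) ^ 2 := by
  have h0 : 0 ≤ dist x y / κ := div_nonneg dist_nonneg hκ.le
  have h1 : dist x y / κ ≤ π / 2 := by rw [div_le_iff₀ hκ]; linarith
  rw [hkKernel, tcos, abs_of_nonneg h0, min_eq_left h1]

lemma hkKernel_pos_iff (hκ : 0 < κ) {x y : X} : 0 < hkKernel κ x y ↔ dist x y < κ * π / 2 := by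
  have h0 : 0 ≤ dist x y / κ := div_nonneg dist_nonneg hκ.le
  constructor
  · intro hpos
    by_contra h
    have h1 : π / 2 ≤ dist x y / κ := by rw [le_div_iff₀ hκ]; linarith
    rw [hkKernel, tcos, abs_of_nonneg h0, min_eq_right h1, cos_pi_div_two] at hpos
    simp at hpos
  · intro h
    rw [hkKernel_eq_cos_sq hκ h]
    have h1 : dist x y / κ < π / 2 := by rw [div_lt_iff₀ hκ]; linarith
    exact pow_pos (cos_pos_of_mem_Ioo ⟨by linarith [pi_pos], h1⟩) 2

lemma hkCost_eq (hκ : 0 < κ) (x y : X) :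
    hkCost κ x y = if hkKernel κ x y = 0 then ⊤ else ENNReal.ofReal (-log (hkKernel κ x y)) := by
  by_cases h : dist x y < κ * π / 2
  · rw [hkCost, if_pos h, if_neg ((hkKernel_pos_iff hκ).mpr h).ne', hkKernel_eq_cos_sq hκ h,
      Real.log_pow]
    push_cast
    ring_nf
  · have : hkKernel κ x y = 0 :=
      le_antisymm (not_lt.mp (mt (hkKernel_pos_iff hκ).mp h)) (hkKernel_nonneg x y)
    rw [hkCost, if_neg h, if_pos this]

lemma ofReal_mul_hkCost_add_phiEnt (hκ : 0 < κ) (x y : X) {s : ℝ} (hs : 0 ≤ s) :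
    ENNReal.ofReal (s * hkKernel κ x y) * hkCost κ x y
        + phiEnt (ENNReal.ofReal (s * hkKernel κ x y))
      = ENNReal.ofReal (s * hkKernel κ x y * log s + 1 - s * hkKernel κ x y) := by
  rw [hkCost_eq hκ]
  rcases hs.eq_or_lt with rfl | hs
  · simp [phiEnt]
  split_ifs with hk
  · simp [hk, phiEnt]
  have hkpos : 0 < hkKernel κ x y := (hkKernel_nonneg x y).lt_of_ne' hk
  have hlog : 0 ≤ -log (hkKernel κ x y) :=
    neg_nonneg.mpr (log_nonpos hkpos.le (hkKernel_le_one x y))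
  rw [← ENNReal.ofReal_mul (by positivity), phiEnt_ofReal (by positivity),
    ← ENNReal.ofReal_add (by positivity) (klFun_nonneg (by positivity)), klFun_apply,
    log_mul hs.ne' hk]
  ring_nf

-- The Fenchel–Young inequality for the entropy; it is an equality at `f = s * hkKernel κ x y`.
lemma ofReal_le_mul_hkCost_add_phiEnt (hκ : 0 < κ) (x y : X) {s : ℝ} (hs : 0 < s)
    (f : ℝ≥0∞) :
    ENNReal.ofReal (1 - s * hkKernel κ x y + f.toReal * log s) ≤ f * hkCost κ x y + phiEnt f := by
  rcases eq_or_ne f ⊤ with rfl | hf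
  · simp [phiEnt]
  obtain ⟨t, ht, rfl⟩ : ∃ t, 0 ≤ t ∧ f = ENNReal.ofReal t :=
    ⟨f.toReal, toReal_nonneg, (ofReal_toReal hf).symm⟩
  rw [hkCost_eq hκ, toReal_ofReal ht]
  split_ifs with hk
  · rcases ht.eq_or_lt with rfl | ht
    · simp [hk, phiEnt]
    · simp [ENNReal.mul_top (ENNReal.ofReal_pos.mpr ht).ne']
  have hkpos : 0 < hkKernel κ x y := (hkKernel_nonneg x y).lt_of_ne' hk
  have hlog : 0 ≤ -log (hkKernel κ x y) :=
    neg_nonneg.mpr (log_nonpos hkpos.le (hkKernel_le_one x y))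
  rw [← ENNReal.ofReal_mul ht, phiEnt_ofReal ht,
    ← ENNReal.ofReal_add (mul_nonneg ht hlog) (klFun_nonneg ht)]
  refine ENNReal.ofReal_le_ofReal ?_
  have := Real.mul_log_sub_le_mul_log_self_sub ht (mul_pos hs hkpos)
  rw [log_mul hs.ne' hk] at this
  rw [klFun_apply]
  linarith

end Kernel

section Potential

variable {X : Type*} [PseudoMetricSpace X] {κ : ℝ}

lemma integrable_hkKernel {Y : Type*} [TopologicalSpace Y] [MeasurableSpace Y]
    [OpensMeasurableSpace Y] (μ : Measure Y) [IsFiniteMeasure μ] {f g : Y → X}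
    (hf : Continuous f) (hg : Continuous g) : Integrable (fun z => hkKernel κ (f z) (g z)) μ :=
  Integrable.of_bound (hf.hkKernel hg).aestronglyMeasurable 1 <| .of_forall fun z => by
    rw [Real.norm_of_nonneg (hkKernel_nonneg _ _)]
    exact hkKernel_le_one _ _

variable [MeasurableSpace X]

def hkPotential (κ : ℝ) (ν : Measure X) (x : X) : ℝ := ∫ y, hkKernel κ x y ∂ν

lemma hkPotential_nonneg (ν : Measure X) (x : X) : 0 ≤ hkPotential κ ν x :=
  integral_nonneg fun _ => hkKernel_nonneg _ _

variable [OpensMeasurableSpace X] (ν : Measure X) [IsFiniteMeasure ν]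

lemma hkPotential_le_measureReal_univ (x : X) : hkPotential κ ν x ≤ ν.real Set.univ := by
  simpa [hkPotential] using integral_mono (integrable_hkKernel ν continuous_const continuous_id')
    (integrable_const 1) fun y => hkKernel_le_one (κ := κ) x y

lemma two_sqrt_hkPotential_le (x : X) : 2 * √(hkPotential κ ν x) ≤ 1 + ν.real Set.univ := by
  have h := hkPotential_le_measureReal_univ (κ := κ) ν x
  nlinarith [sq_nonneg (√(hkPotential κ ν x) - 1), Real.sq_sqrt (hkPotential_nonneg (κ := κ) ν x)]

lemma continuous_hkPotential : Continuous (hkPotential κ ν) :=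
  continuous_of_dominated
    (fun x => (integrable_hkKernel ν continuous_const continuous_id').aestronglyMeasurable)
    (fun x => .of_forall fun y => by
      rw [Real.norm_of_nonneg (hkKernel_nonneg _ _)]
      exact hkKernel_le_one x y)
    (integrable_const 1) (.of_forall fun y => continuous_id'.hkKernel continuous_const)

end Potential

section DiracDistance

variable {X : Type*} [MetricSpace X] [MeasurableSpace X] [OpensMeasurableSpace X] {κ : ℝ}

lemma measurable_hkCost (κ : ℝ) (x : X) : Measurable (hkCost κ x) :=
  Measurable.ite
    (measurableSet_lt (continuous_const.dist continuous_id').measurable measurable_const)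
    (ENNReal.measurable_ofReal.comp
      ((((continuous_const.dist continuous_id').measurable.div_const κ).cos.log).const_mul (-2)))
    measurable_const

variable (ν : Measure X) [IsFiniteMeasure ν]

lemma HK2_dirac_le_withDensity (x : X) {f : X → ℝ≥0∞} (hf : Measurable f)
    (hfin : ∫⁻ y, f y ∂ν ≠ ⊤) :
    HK2 κ (Measure.dirac x) ν ≤
      (∫⁻ y, (f y * hkCost κ x y + phiEnt (f y)) ∂ν) + phiEnt (∫⁻ y, f y ∂ν) := by
  set σ := ν.withDensity f
  have : IsFiniteMeasure σ := isFiniteMeasure_withDensity hfin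
  have hmass : σ Set.univ = ∫⁻ y, f y ∂ν := by rw [withDensity_apply _ .univ, Measure.restrict_univ]
  refine (iInf₂_le (σ.map (Prod.mk x))
    (by infer_instance : IsFiniteMeasure (σ.map (Prod.mk x)))).trans_eq ?_
  rw [Measure.map_map measurable_fst measurable_prodMk_left,
    Measure.map_map measurable_snd measurable_prodMk_left]
  rw [show Prod.fst ∘ Prod.mk x = fun _ => x from rfl, Measure.map_const, hmass, KLdiv_smul_dirac,
    show Prod.snd ∘ Prod.mk x = id from rfl, Measure.map_id, KLdiv_withDensity ν hf,
    (measurableEmbedding_prodMk_left x).lintegral_map,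
    lintegral_withDensity_eq_lintegral_mul _ hf (measurable_hkCost κ x)]
  have hfc : Measurable fun y => f y * hkCost κ x y := hf.mul (measurable_hkCost κ x)
  simp only [Pi.mul_apply]
  rw [lintegral_add_left hfc, add_right_comm]

lemma le_HK2_dirac_of_forall_density (x : X) {a : ℝ≥0∞}
    (h : ∀ f : X → ℝ≥0∞, Measurable f → ∫⁻ y, f y ∂ν ≠ ⊤ →
      a ≤ (∫⁻ y, (f y * hkCost κ x y + phiEnt (f y)) ∂ν) + phiEnt (∫⁻ y, f y ∂ν)) :
    a ≤ HK2 κ (Measure.dirac x) ν := by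
  refine le_iInf₂ fun γ hγ => ?_
  by_cases h1 : γ.map Prod.fst ≪ Measure.dirac x
  swap
  · simp [KLdiv, h1]
  by_cases h2 : γ.map Prod.snd ≪ ν
  swap
  · simp [KLdiv, h2]
  set f := (γ.map Prod.snd).rnDeriv ν
  have hmass : ∫⁻ y, f y ∂ν = γ Set.univ := by
    rw [Measure.lintegral_rnDeriv h2, Measure.map_apply measurable_snd .univ, Set.preimage_univ]
  have hKL1 : KLdiv (γ.map Prod.fst) (Measure.dirac x) = phiEnt (γ Set.univ) := by
    rw [eq_smul_dirac_of_absolutelyContinuous h1, KLdiv_smul_dirac,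
      Measure.map_apply measurable_fst .univ, Set.preimage_univ]
  have hx : ∀ᵐ p ∂γ, p.1 = x :=
    (ae_map_iff measurable_fst.aemeasurable (measurableSet_singleton x)).mp
      (h1.ae_le ((ae_dirac_iff (p := fun y => y = x) (measurableSet_singleton x)).mpr rfl))
  have hcost : ∫⁻ p, hkCost κ p.1 p.2 ∂γ = ∫⁻ y, f y * hkCost κ x y ∂ν := by
    rw [lintegral_rnDeriv_mul h2 (measurable_hkCost κ x).aemeasurable,
      lintegral_map (measurable_hkCost κ x) measurable_snd]
    exact lintegral_congr_ae (hx.mono fun p hp => by simp only [hp])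
  refine (h f (Measure.measurable_rnDeriv _ _) (hmass ▸ measure_ne_top γ _)).trans_eq ?_
  have hfc : Measurable fun y => f y * hkCost κ x y :=
    (Measure.measurable_rnDeriv _ _).mul (measurable_hkCost κ x)
  rw [hmass, hcost, hKL1, KLdiv, if_pos h2, lintegral_add_left hfc, add_right_comm]

lemma HK2_dirac_le (hκ : 0 < κ) (x : X) :
    HK2 κ (Measure.dirac x) ν ≤
      ENNReal.ofReal (1 + ν.real Set.univ - 2 * √(hkPotential κ ν x)) := by
  set C := hkPotential κ ν x
  -- For `C = 0` this is `s = 0`, i.e. the zero plan.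
  set s := (√C)⁻¹
  have hs : 0 ≤ s := inv_nonneg.mpr (sqrt_nonneg C)
  have hsC : s * C = √C := by rw [inv_mul_eq_div, Real.div_sqrt]
  have hk : Integrable (fun y => s * hkKernel κ x y) ν :=
    (integrable_hkKernel ν continuous_const continuous_id').const_mul s
  have hg : Measurable fun y => ENNReal.ofReal (s * hkKernel κ x y) :=
    ENNReal.measurable_ofReal.comp
      ((continuous_const.hkKernel continuous_id').measurable.const_mul s)
  have hmass : ∫⁻ y, ENNReal.ofReal (s * hkKernel κ x y) ∂ν = ENNReal.ofReal √C := by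
    rw [← ofReal_integral_eq_lintegral_ofReal hk
      (.of_forall fun y => mul_nonneg hs (hkKernel_nonneg x y)), integral_const_mul, ← hsC]
    rfl
  set h : X → ℝ := fun y => s * hkKernel κ x y * log s + 1 - s * hkKernel κ x y
  have hh : ∀ y, 0 ≤ h y := fun y =>
    Real.mul_log_add_one_sub_nonneg (mul_nonneg hs (hkKernel_nonneg x y))
      (mul_le_of_le_one_right hs (hkKernel_le_one x y))
  have hint : ∫ y, h y ∂ν = C * s * log s + ν.real Set.univ - s * C := by
    simp only [h, show ∀ y, s * hkKernel κ x y * log s + 1 - s * hkKernel κ x y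
      = log s * (s * hkKernel κ x y) - s * hkKernel κ x y + 1 from fun y => by ring]
    have i1 : Integrable (fun y => log s * (s * hkKernel κ x y) - s * hkKernel κ x y) ν :=
      (hk.const_mul _).sub hk
    rw [integral_add i1 (integrable_const 1), integral_sub (hk.const_mul _) hk,
      integral_const_mul, integral_const_mul, integral_const, smul_eq_mul, mul_one]
    change log s * (s * C) - s * C + _ = _
    ring
  have hhi : Integrable h ν := (hk.mul_const _).add (integrable_const 1) |>.sub hk
  refine (HK2_dirac_le_withDensity ν x hg (hmass ▸ ofReal_ne_top)).trans_eq ?_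
  simp_rw [ofReal_mul_hkCost_add_phiEnt hκ x _ hs]
  rw [hmass, ← ofReal_integral_eq_lintegral_ofReal hhi (.of_forall hh),
    phiEnt_ofReal (sqrt_nonneg C),
    ← ENNReal.ofReal_add (integral_nonneg hh) (klFun_nonneg (sqrt_nonneg C)), hint, klFun_apply,
    show C * s = √C by rw [mul_comm, hsC], hsC, show log s = -log √C from Real.log_inv _]
  ring_nf

lemma le_HK2_dirac (hκ : 0 < κ) (x : X) :
    ENNReal.ofReal (1 + ν.real Set.univ - 2 * √(hkPotential κ ν x)) ≤
      HK2 κ (Measure.dirac x) ν := by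
  refine le_HK2_dirac_of_forall_density ν x fun f hf hfin => ?_
  set M := (∫⁻ y, f y ∂ν).toReal
  obtain ⟨s, hs, hsM⟩ := exists_pos_one_sub_two_sqrt_le (hkPotential_nonneg (κ := κ) ν x)
    (toReal_nonneg : 0 ≤ M)
  have hk : Integrable (fun y => s * hkKernel κ x y) ν :=
    (integrable_hkKernel ν continuous_const continuous_id').const_mul s
  have i1 : Integrable (fun y => 1 - s * hkKernel κ x y) ν := (integrable_const 1).sub hk
  have i2 : Integrable (fun y => (f y).toReal * log s) ν :=
    (integrable_toReal_of_lintegral_ne_top hf.aemeasurable hfin).mul_const _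
  have hint : ∫ y, (1 - s * hkKernel κ x y + (f y).toReal * log s) ∂ν
      = ν.real Set.univ - s * hkPotential κ ν x + M * log s := by
    rw [integral_add i1 i2, integral_sub (integrable_const 1) hk, integral_const,
      integral_const_mul, integral_mul_const, integral_toReal hf.aemeasurable (ae_lt_top hf hfin),
      smul_eq_mul, mul_one]
    rfl
  calc ENNReal.ofReal (1 + ν.real Set.univ - 2 * √(hkPotential κ ν x))
      ≤ ENNReal.ofReal (∫ y, (1 - s * hkKernel κ x y + (f y).toReal * log s) ∂ν)
          + ENNReal.ofReal (klFun M) :=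
        (ENNReal.ofReal_le_ofReal (by linarith)).trans ENNReal.ofReal_add_le
    _ ≤ (∫⁻ y, (f y * hkCost κ x y + phiEnt (f y)) ∂ν) + phiEnt (∫⁻ y, f y ∂ν) := by
        gcongr
        · exact (ofReal_integral_le_lintegral_ofReal (i1.add i2)).trans
            (lintegral_mono fun y => ofReal_le_mul_hkCost_add_phiEnt hκ x y hs (f y))
        · rw [← phiEnt_ofReal toReal_nonneg, ofReal_toReal hfin]

theorem HK2_dirac (hκ : 0 < κ) (x : X) :
    HK2 κ (Measure.dirac x) ν = ENNReal.ofReal (1 + ν.real Set.univ - 2 * √(hkPotential κ ν x)) :=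
  le_antisymm (HK2_dirac_le ν hκ x) (le_HK2_dirac ν hκ x)

end DiracDistance

section Objective

variable {X : Type*} [PseudoMetricSpace X] [MeasurableSpace X] {κ : ℝ}

def JDiracReal (ρ : Measure X) (κ : ℝ) (ν : Measure X) : ℝ :=
  1 + ν.real Set.univ - 2 * ∫ x, √(hkPotential κ ν x) ∂ρ

lemma JDiracReal_smul (ρ ν : Measure X) (c : ℝ≥0) :
    JDiracReal ρ κ (c • ν) = 1 + c * ν.real Set.univ - 2 * (√c * ∫ x, √(hkPotential κ ν x) ∂ρ) := by
  simp only [JDiracReal, measureReal_nnreal_smul_apply, hkPotential, integral_smul_nnreal_measure,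
    NNReal.smul_def, smul_eq_mul, sqrt_mul c.coe_nonneg, integral_const_mul]

lemma integral_sqrt_hkPotential_eq_of_isMin (ρ ν : Measure X) [IsFiniteMeasure ν]
    (hmin : ∀ ν' : Measure X, IsFiniteMeasure ν' → JDiracReal ρ κ ν ≤ JDiracReal ρ κ ν') :
    ∫ x, √(hkPotential κ ν x) ∂ρ = ν.real Set.univ := by
  set S := ∫ x, √(hkPotential κ ν x) ∂ρ
  set N := ν.real Set.univ
  have hloc : IsLocalMin (fun c => 1 + c * N - 2 * (√c * S)) 1 := by
    filter_upwards [lt_mem_nhds one_pos] with c hc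
    have h1 := JDiracReal_smul (κ := κ) ρ ν 1
    have hc' := JDiracReal_smul (κ := κ) ρ ν c.toNNReal
    rw [one_smul, NNReal.coe_one] at h1
    rw [Real.coe_toNNReal c hc.le] at hc'
    rw [← h1, ← hc']
    exact hmin _ inferInstance
  have hderiv : HasDerivAt (fun c => 1 + c * N - 2 * (√c * S)) (N - S) 1 := by
    rw [show N - S = 1 * N - 2 * (1 / (2 * √1) * S) by norm_num; ring]
    exact (((hasDerivAt_id (1 : ℝ)).mul_const N).const_add 1).sub
      (((Real.hasDerivAt_sqrt one_ne_zero).mul_const S).const_mul 2)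
  linarith [hloc.hasDerivAt_eq_zero hderiv]

variable [OpensMeasurableSpace X] (ρ : Measure X) [IsProbabilityMeasure ρ]

lemma integrable_sqrt_hkPotential {μ : Measure X} [IsFiniteMeasure μ] (ν : Measure X)
    [IsFiniteMeasure ν] : Integrable (fun x => √(hkPotential κ ν x)) μ :=
  Integrable.of_bound (continuous_hkPotential ν).sqrt.aestronglyMeasurable (1 + ν.real Set.univ)
    (.of_forall fun x => by
      rw [Real.norm_of_nonneg (sqrt_nonneg _)]
      linarith [two_sqrt_hkPotential_le (κ := κ) ν x, sqrt_nonneg (hkPotential κ ν x)])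

lemma JDiracReal_eq_integral (ν : Measure X) [IsFiniteMeasure ν] :
    JDiracReal ρ κ ν = ∫ x, (1 + ν.real Set.univ - 2 * √(hkPotential κ ν x)) ∂ρ := by
  rw [integral_sub (integrable_const _) ((integrable_sqrt_hkPotential ν).const_mul 2),
    integral_const, integral_const_mul, probReal_univ, one_smul, JDiracReal]

lemma JDiracReal_nonneg (ν : Measure X) [IsFiniteMeasure ν] : 0 ≤ JDiracReal ρ κ ν := by
  rw [JDiracReal_eq_integral]
  exact integral_nonneg fun x => sub_nonneg.mpr (two_sqrt_hkPotential_le ν x)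

end Objective

section FirstOrder

variable {X : Type*} [MetricSpace X] [MeasurableSpace X] [OpensMeasurableSpace X] {κ : ℝ}
  (ρ : Measure X) [IsProbabilityMeasure ρ]

theorem JDirac_eq_ofReal (hκ : 0 < κ) (ν : Measure X) [IsFiniteMeasure ν] :
    JDirac ρ κ ν = ENNReal.ofReal (JDiracReal ρ κ ν) := by
  have hi : Integrable (fun x => 1 + ν.real Set.univ - 2 * √(hkPotential κ ν x)) ρ :=
    (integrable_const _).sub ((integrable_sqrt_hkPotential ν).const_mul 2)
  rw [JDirac, lintegral_congr (HK2_dirac ν hκ), JDiracReal_eq_integral,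
    ofReal_integral_eq_lintegral_ofReal hi
      (.of_forall fun x => sub_nonneg.mpr (two_sqrt_hkPotential_le ν x))]

lemma primalMin_iff (hκ : 0 < κ) (ν : Measure X) [IsFiniteMeasure ν] :
    PrimalMin ρ κ ν ↔
      ∀ ν' : Measure X, IsFiniteMeasure ν' → JDiracReal ρ κ ν ≤ JDiracReal ρ κ ν' := by
  refine (and_iff_right ‹_›).trans (forall₂_congr fun ν' _ => ?_)
  rw [JDirac_eq_ofReal ρ hκ, JDirac_eq_ofReal ρ hκ,
    ENNReal.ofReal_le_ofReal_iff (JDiracReal_nonneg ρ ν')]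

variable (ν : Measure X) [IsFiniteMeasure ν]

lemma hkPotential_add_smul_dirac (y : X) (t : ℝ≥0) (x : X) :
    hkPotential κ (ν + t • Measure.dirac y) x = hkPotential κ ν x + t * hkKernel κ x y := by
  rw [hkPotential, integral_add_measure (integrable_hkKernel ν continuous_const continuous_id')
    (integrable_hkKernel _ continuous_const continuous_id'), integral_smul_nnreal_measure,
    integral_dirac, NNReal.smul_def, smul_eq_mul]
  rfl

lemma integral_hkKernel_div_sqrt_le_one_of_isMin
    (hmin : ∀ ν' : Measure X, IsFiniteMeasure ν' → JDiracReal ρ κ ν ≤ JDiracReal ρ κ ν')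
    (y : X) {t : ℝ} (ht : 0 < t) :
    ∫ x, hkKernel κ x y / √(hkPotential κ ν x + t) ∂ρ ≤ 1 := by
  set ν' := ν + t.toNNReal • Measure.dirac y
  have hmass : ν'.real Set.univ = ν.real Set.univ + t := by
    rw [measureReal_add_apply, measureReal_nnreal_smul_apply, probReal_univ (μ := Measure.dirac y),
      mul_one, Real.coe_toNNReal t ht.le]
  have hgain : ∫ x, (√(hkPotential κ ν' x) - √(hkPotential κ ν x)) ∂ρ ≤ t / 2 := by
    have hJ := hmin ν' inferInstance
    rw [JDiracReal, JDiracReal, hmass] at hJ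
    rw [integral_sub (integrable_sqrt_hkPotential ν') (integrable_sqrt_hkPotential ν)]
    linarith
  have hpert : t / 2 * ∫ x, hkKernel κ x y / √(hkPotential κ ν x + t) ∂ρ ≤ t / 2 := by
    rw [← integral_const_mul]
    refine (integral_mono_of_nonneg (.of_forall fun x => ?_) ((integrable_sqrt_hkPotential ν').sub
      (integrable_sqrt_hkPotential ν)) (.of_forall fun x => ?_)).trans hgain
    · have := hkKernel_nonneg (κ := κ) x y
      positivity
    · calc t / 2 * (hkKernel κ x y / √(hkPotential κ ν x + t))
          = t * hkKernel κ x y / (2 * √(hkPotential κ ν x + t)) := by ring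
        _ ≤ √(hkPotential κ ν' x) - √(hkPotential κ ν x) := by
          rw [hkPotential_add_smul_dirac, Real.coe_toNNReal t ht.le]
          exact Real.div_two_sqrt_le_sqrt_add_sub_sqrt (hkPotential_nonneg ν x)
            (mul_nonneg ht.le (hkKernel_nonneg x y))
            (mul_le_of_le_one_right ht.le (hkKernel_le_one x y))
  nlinarith

lemma dualAdm_one_sub_sqrt_hkPotential
    (hmin : ∀ ν' : Measure X, IsFiniteMeasure ν' → JDiracReal ρ κ ν ≤ JDiracReal ρ κ ν')
    {t : ℝ} (ht : 0 < t) : DualAdm ρ κ fun x => 1 - √(hkPotential κ ν x + t) := by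
  refine ⟨continuous_const.sub ((continuous_hkPotential ν).add continuous_const).sqrt,
    fun x => sub_lt_self _ (sqrt_pos.mpr (by linarith [hkPotential_nonneg (κ := κ) ν x])),
    fun y => ?_⟩
  change ∫ x, hkKernel κ x y / (1 - (1 - √(hkPotential κ ν x + t))) ∂ρ ≤ 1
  convert integral_hkKernel_div_sqrt_le_one_of_isMin ρ ν hmin y ht using 4
  ring

lemma JDiracReal_le_of_isMin
    (hmin : ∀ ν' : Measure X, IsFiniteMeasure ν' → JDiracReal ρ κ ν ≤ JDiracReal ρ κ ν')
    {a : ℝ} (ha : ∀ ψ, DualAdm ρ κ ψ → ∫ x, ψ x ∂ρ ≤ a) : JDiracReal ρ κ ν ≤ a := by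
  refine le_of_forall_pos_le_add fun ε hε => ?_
  have hψ := ha _ (dualAdm_one_sub_sqrt_hkPotential ρ ν hmin (pow_pos hε 2))
  have hi : Integrable (fun x => √(hkPotential κ ν x + ε ^ 2)) ρ :=
    Integrable.of_bound ((continuous_hkPotential ν).add continuous_const).sqrt.aestronglyMeasurable
      (√(ν.real Set.univ + ε ^ 2)) (.of_forall fun x => by
        rw [Real.norm_of_nonneg (sqrt_nonneg _)]
        exact sqrt_le_sqrt (by linarith [hkPotential_le_measureReal_univ (κ := κ) ν x]))
  have hle : ∫ x, √(hkPotential κ ν x + ε ^ 2) ∂ρ ≤ ∫ x, (√(hkPotential κ ν x) + ε) ∂ρ :=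
    integral_mono hi ((integrable_sqrt_hkPotential ν).add (integrable_const ε))
    fun x => show √(hkPotential κ ν x + ε ^ 2) ≤ √(hkPotential κ ν x) + ε by
      rw [sqrt_le_left (by positivity)]
      nlinarith [sq_sqrt (hkPotential_nonneg (κ := κ) ν x), sqrt_nonneg (hkPotential κ ν x)]
  rw [integral_add (integrable_sqrt_hkPotential ν) (integrable_const ε), integral_const,
    probReal_univ, one_smul] at hle
  rw [integral_sub (integrable_const 1) hi, integral_const, probReal_univ, one_smul] at hψ
  have hS := integral_sqrt_hkPotential_eq_of_isMin ρ ν hmin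
  rw [JDiracReal]
  linarith

end FirstOrder

section Duality

variable {X : Type*} [PseudoMetricSpace X] [CompactSpace X] [MeasurableSpace X]
  [OpensMeasurableSpace X] {κ : ℝ} (ρ : Measure X) [IsFiniteMeasure ρ] (ν : Measure X)
  [IsFiniteMeasure ν] {ψ : X → ℝ}

lemma continuous_Fcon (hψ : Continuous ψ) (hψ1 : ∀ x, ψ x < 1) : Continuous (Fcon ρ κ ψ) := by
  have hpos : ∀ x, 0 < 1 - ψ x := fun x => sub_pos.mpr (hψ1 x)
  refine continuous_of_dominated (bound := fun x => (1 - ψ x)⁻¹) (fun y => ?_) (fun y => ?_)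
    ((continuous_const.sub hψ).inv₀ fun x => (hpos x).ne').integrable_of_compactSpace
    (.of_forall fun x => ((continuous_const.hkKernel continuous_id').div_const _))
  · exact ((continuous_id'.hkKernel continuous_const).div (continuous_const.sub hψ)
      fun x => (hpos x).ne').aestronglyMeasurable
  · refine .of_forall fun x => ?_
    change ‖hkKernel κ x y / (1 - ψ x)‖ ≤ (1 - ψ x)⁻¹
    rw [Real.norm_of_nonneg (div_nonneg (hkKernel_nonneg x y) (hpos x).le), div_eq_mul_inv]
    exact mul_le_of_le_one_left (inv_nonneg.mpr (hpos x).le) (hkKernel_le_one x y)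

lemma integral_Fcon (hψ : Continuous ψ) (hψ1 : ∀ x, ψ x < 1) :
    ∫ y, Fcon ρ κ ψ y ∂ν = ∫ x, hkPotential κ ν x / (1 - ψ x) ∂ρ := by
  have hcont : Continuous fun p : X × X => hkKernel κ p.2 p.1 / (1 - ψ p.2) :=
    (continuous_snd.hkKernel continuous_fst).div (continuous_const.sub (hψ.comp continuous_snd))
      fun p => (sub_pos.mpr (hψ1 p.2)).ne'
  simp only [Fcon, hkPotential, ← integral_div]
  exact integral_integral_swap hcont.integrable_of_compactSpace

variable [IsProbabilityMeasure ρ]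

lemma JDiracReal_sub_integral_eq (hψ : Continuous ψ) (hψ1 : ∀ x, ψ x < 1) :
    JDiracReal ρ κ ν - ∫ x, ψ x ∂ρ
      = ∫ x, (1 - ψ x - √(hkPotential κ ν x)) ^ 2 / (1 - ψ x) ∂ρ + ∫ y, (1 - Fcon ρ κ ψ y) ∂ν := by
  have hpos : ∀ x, 0 < 1 - ψ x := fun x => sub_pos.mpr (hψ1 x)
  have i1 : Integrable (fun x => 1 - ψ x) ρ := (continuous_const.sub hψ).integrable_of_compactSpace
  have i2 : Integrable (fun x => hkPotential κ ν x / (1 - ψ x)) ρ :=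
    ((continuous_hkPotential ν).div (continuous_const.sub hψ)
      fun x => (hpos x).ne').integrable_of_compactSpace
  have i3 : Integrable (fun x => 2 * √(hkPotential κ ν x)) ρ :=
    (integrable_sqrt_hkPotential ν).const_mul 2
  have hgap : ∫ x, (1 - ψ x - √(hkPotential κ ν x)) ^ 2 / (1 - ψ x) ∂ρ
      = ∫ x, (1 - ψ x + hkPotential κ ν x / (1 - ψ x) - 2 * √(hkPotential κ ν x)) ∂ρ :=
    integral_congr_ae (.of_forall fun x =>
      (Real.add_div_sub_two_sqrt (hpos x).ne' (hkPotential_nonneg ν x)).symm)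
  have i12 : Integrable (fun x => 1 - ψ x + hkPotential κ ν x / (1 - ψ x)) ρ := i1.add i2
  rw [hgap, integral_sub i12 i3, integral_add i1 i2, integral_sub (integrable_const 1)
    ((continuous_Fcon ρ hψ hψ1).integrable_of_compactSpace), integral_Fcon ρ ν hψ hψ1,
    integral_sub (integrable_const 1) hψ.integrable_of_compactSpace, integral_const_mul,
    integral_const, integral_const, probReal_univ, JDiracReal]
  simp only [smul_eq_mul, mul_one]
  ring

lemma integral_le_JDiracReal (hψ : DualAdm ρ κ ψ) : ∫ x, ψ x ∂ρ ≤ JDiracReal ρ κ ν := by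
  obtain ⟨hc, hψ1, hF⟩ := hψ
  refine sub_nonneg.mp ?_
  rw [JDiracReal_sub_integral_eq ρ ν hc hψ1]
  exact add_nonneg (integral_nonneg fun x => div_nonneg (sq_nonneg _) (sub_pos.mpr (hψ1 x)).le)
    (integral_nonneg fun y => sub_nonneg.mpr (hF y))

lemma integral_eq_JDiracReal_iff (hψ : DualAdm ρ κ ψ) :
    ∫ x, ψ x ∂ρ = JDiracReal ρ κ ν ↔
      (∀ᵐ x ∂ρ, ψ x = 1 - √(hkPotential κ ν x)) ∧ ∀ᵐ y ∂ν, Fcon ρ κ ψ y = 1 := by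
  obtain ⟨hc, hψ1, hF⟩ := hψ
  have hpos : ∀ x, 0 < 1 - ψ x := fun x => sub_pos.mpr (hψ1 x)
  have h1 : 0 ≤ fun x => (1 - ψ x - √(hkPotential κ ν x)) ^ 2 / (1 - ψ x) :=
    fun x => div_nonneg (sq_nonneg _) (hpos x).le
  have h2 : 0 ≤ fun y => 1 - Fcon ρ κ ψ y := fun y => sub_nonneg.mpr (hF y)
  rw [eq_comm, ← sub_eq_zero, JDiracReal_sub_integral_eq ρ ν hc hψ1,
    add_eq_zero_iff_of_nonneg (integral_nonneg h1) (integral_nonneg h2),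
    integral_eq_zero_iff_of_nonneg h1 (((continuous_const.sub hc).sub
      (continuous_hkPotential ν).sqrt).pow 2 |>.div (continuous_const.sub hc)
        fun x => (hpos x).ne').integrable_of_compactSpace,
    integral_eq_zero_iff_of_nonneg h2
      (continuous_const.sub (continuous_Fcon ρ hc hψ1)).integrable_of_compactSpace]
  refine and_congr (eventually_congr (.of_forall fun x => ?_))
    (eventually_congr (.of_forall fun y => ?_))
  · change (1 - ψ x - √(hkPotential κ ν x)) ^ 2 / (1 - ψ x) = 0 ↔ _
    rw [_root_.div_eq_zero_iff, or_iff_left (hpos x).ne', pow_eq_zero_iff two_ne_zero]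
    constructor <;> intro h <;> linarith
  · change 1 - Fcon ρ κ ψ y = 0 ↔ _
    rw [sub_eq_zero, eq_comm]

end Duality

theorem primalMin_and_dualOpt_iff {X : Type*} [MetricSpace X] [CompactSpace X] [MeasurableSpace X]
    [OpensMeasurableSpace X] {κ : ℝ} (hκ : 0 < κ) (ρ : Measure X) [IsProbabilityMeasure ρ]
    (ν : Measure X) [IsFiniteMeasure ν] {ψ : X → ℝ} (hψ : DualAdm ρ κ ψ) :
    (PrimalMin ρ κ ν ∧ DualOpt ρ κ ψ) ↔
      (∀ᵐ x ∂ρ, ψ x = 1 - √(hkPotential κ ν x)) ∧ ∀ᵐ y ∂ν, Fcon ρ κ ψ y = 1 := by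
  rw [← integral_eq_JDiracReal_iff ρ ν hψ, primalMin_iff ρ hκ]
  constructor
  · rintro ⟨hmin, -, hmax⟩
    exact le_antisymm (integral_le_JDiracReal ρ ν hψ) (JDiracReal_le_of_isMin ρ ν hmin hmax)
  · intro heq
    exact ⟨fun ν' _ => heq ▸ integral_le_JDiracReal ρ ν' hψ, hψ,
      fun ψ' hψ' => heq ▸ integral_le_JDiracReal ρ ν hψ'⟩

theorem hk_dirac_optimality_conditions_general {d : ℕ} (Ω : Set (Ed d)) (hΩ₁ : IsCompact Ω)
    (ρ : Measure ↥Ω) [IsProbabilityMeasure ρ] (κ : ℝ) (hκ : 0 < κ)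
    (ν : Measure ↥Ω) [IsFiniteMeasure ν] (ψ : ↥Ω → ℝ) (hψ : DualAdm ρ κ ψ) :
    (PrimalMin ρ κ ν ∧ DualOpt ρ κ ψ) ↔
      ((∀ᵐ x ∂ρ, ψ x = 1 - Real.sqrt (∫ y, tcos (dist x y / κ) ^ 2 ∂ν)) ∧
       (∀ᵐ y ∂ν, Fcon ρ κ ψ y = 1)) := by
  have : CompactSpace Ω := isCompact_iff_compactSpace.mp hΩ₁
  exact primalMin_and_dualOpt_iff hκ ρ ν hψ

/-- Primal-dual optimality conditions: an admissible pair is optimal iff the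
complementarity relations hold. -/
theorem hk_dirac_optimality_conditions {d : ℕ} (Ω : Set (Ed d)) (hΩ₁ : IsCompact Ω)
    (hΩ₂ : Convex ℝ Ω) (hΩ₃ : (interior Ω).Nonempty)
    (ρ : Measure ↥Ω) [IsProbabilityMeasure ρ] (κ : ℝ) (hκ : 0 < κ)
    (ν : Measure ↥Ω) [IsFiniteMeasure ν] (ψ : ↥Ω → ℝ) (hψ : DualAdm ρ κ ψ) :
    (PrimalMin ρ κ ν ∧ DualOpt ρ κ ψ) ↔
      ((∀ᵐ x ∂ρ, ψ x = 1 - Real.sqrt (∫ y, tcos (dist x y / κ) ^ 2 ∂ν)) ∧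
       (∀ᵐ y ∂ν, Fcon ρ κ ψ y = 1)) :=
  hk_dirac_optimality_conditions_general Ω hΩ₁ ρ κ hκ ν ψ hψ

end
end
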